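/- arXiv:2601.02703 — 8 statements merged into one kernel-verified Lean document; each statement's English description precedes it below -/
import Mathlib

section
/- Let M, R, a, x be natural numbers with R^2 ≤ M < (R+1)^2, a ≤ 99, x ≤ 9, and suppose (20·R + x)·x ≤ 100·(M - R^2) + a and 100·(M - R^2) + a < (20·R + (x+1))·(x+1). Then (10·R + x)^2 ≤ 100·M + a < (10·R + x + 1)^2; equivalently, 10·R + x = Nat.sqrt (100·M + a). -/
/-!
Write `Δ = b²(M - R²) + a`. Since `b²M + a = (bR)² + Δ` and `(bR + x)² = (bR)² + (2bR + x)x`,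
the two conditions on the digit `x` say exactly that `(bR + x)² ≤ b²M + a < (bR + x + 1)²`,
i.e. that `bR + x` is the integer square root of `b²M + a`.
-/

namespace Nat

variable {b M R a : ℕ}

lemma mul_sq_add_eq_sq_add (hR : R ^ 2 ≤ M) :
    b ^ 2 * M + a = (b * R) ^ 2 + (b ^ 2 * (M - R ^ 2) + a) := by
  obtain ⟨D, rfl⟩ := Nat.exists_eq_add_of_le hR
  rw [Nat.add_sub_cancel_left]
  ring

lemma sq_mul_add_le_iff (hR : R ^ 2 ≤ M) (x : ℕ) :
    (b * R + x) ^ 2 ≤ b ^ 2 * M + a ↔ (2 * b * R + x) * x ≤ b ^ 2 * (M - R ^ 2) + a := by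
  rw [mul_sq_add_eq_sq_add hR, show (b * R + x) ^ 2 = (b * R) ^ 2 + (2 * b * R + x) * x by ring,
    Nat.add_le_add_iff_left]

lemma lt_sq_mul_add_iff (hR : R ^ 2 ≤ M) (x : ℕ) :
    b ^ 2 * M + a < (b * R + x) ^ 2 ↔ b ^ 2 * (M - R ^ 2) + a < (2 * b * R + x) * x := by
  simpa only [not_le] using (sq_mul_add_le_iff (a := a) hR x).not

end Nat

theorem sqrt_digit_step_general (M R a x : ℕ)
    (hR : R ^ 2 ≤ M)
    (hfeas : (20 * R + x) * x ≤ 100 * (M - R ^ 2) + a)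
    (hmax : 100 * (M - R ^ 2) + a < (20 * R + (x + 1)) * (x + 1)) :
    ((10 * R + x) ^ 2 ≤ 100 * M + a ∧ 100 * M + a < (10 * R + x + 1) ^ 2) ∧
      10 * R + x = Nat.sqrt (100 * M + a) := by
  have hbounds : (10 * R + x) ^ 2 ≤ 100 * M + a ∧ 100 * M + a < (10 * R + x + 1) ^ 2 := by
    constructor
    · simpa using (Nat.sq_mul_add_le_iff (b := 10) (a := a) hR x).mpr (by norm_num [hfeas])
    · simpa [add_assoc] using
        (Nat.lt_sq_mul_add_iff (b := 10) (a := a) hR (x + 1)).mpr (by norm_num [hmax])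
  exact ⟨hbounds, Nat.eq_sqrt'.mpr hbounds⟩

/-- Inductive step of the remainder invariant for the digit-by-digit
integer square root algorithm. -/
theorem sqrt_digit_step (M R a x : ℕ)
    (hR : R ^ 2 ≤ M) (hR' : M < (R + 1) ^ 2)
    (ha : a ≤ 99) (hx : x ≤ 9)
    (hfeas : (20 * R + x) * x ≤ 100 * (M - R ^ 2) + a)
    (hmax : 100 * (M - R ^ 2) + a < (20 * R + (x + 1)) * (x + 1)) :
    ((10 * R + x) ^ 2 ≤ 100 * M + a ∧ 100 * M + a < (10 * R + x + 1) ^ 2) ∧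
      10 * R + x = Nat.sqrt (100 * M + a) :=
  sqrt_digit_step_general M R a x hR hfeas hmax
end

section
/- For all natural numbers N and j, Nat.sqrt (N / 10^(2·j)) = (Nat.sqrt N) / 10^j, where / denotes natural-number (floor) division. -/
namespace Nat

theorem sqrt_div_mul_self (n m : ℕ) : sqrt (n / (m * m)) = sqrt n / m := by
  rcases Nat.eq_zero_or_pos m with rfl | hm
  · simp
  refine eq_of_forall_le_iff fun k => ?_
  calc k ≤ sqrt (n / (m * m)) ↔ k * k * (m * m) ≤ n := by
        rw [le_sqrt, Nat.le_div_iff_mul_le (Nat.mul_pos hm hm)]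
    _ ↔ k * m * (k * m) ≤ n := by rw [Nat.mul_mul_mul_comm]
    _ ↔ k ≤ sqrt n / m := by rw [← le_sqrt, Nat.le_div_iff_mul_le hm]

end Nat

/-- Prefix stability of the integer square root: the integer square root of the
number formed by the highest digit pairs of `N` consists of the leading digits
of `Nat.sqrt N`. -/
theorem sqrt_prefix_stable (N j : ℕ) :
    Nat.sqrt (N / 10 ^ (2 * j)) = Nat.sqrt N / 10 ^ j := by
  rw [pow_mul', sq, Nat.sqrt_div_mul_self]
end

section
/- Define step : ℕ × ℕ → ℕ → ℕ × ℕ by step (R, Δ) a = (10·R + x, 100·Δ + a − (20·R + x)·x), where x is the greatest natural number with x ≤ 9 and (20·R + x)·x ≤ 100·Δ + a. Let L be a list of natural numbers each ≤ 99, let N = L.foldl (fun n a => 100·n + a) 0, and let (R, Δ) = L.foldl step (0, 0). Then N = R^2 + Δ, R^2 ≤ N < (R+1)^2 (so R = Nat.sqrt N), and Δ = 0 if and only if N is a perfect square. -/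
/-!
Write `n = R² + Δ`. The pair `(R, Δ)` has `R = ⌊√n⌋` exactly when `Δ ≤ 2R`, since
`(R + 1)² = R² + 2R + 1`. Bringing down a block `a ≤ 99` turns `n` into `100n + a`, and
`(10R + x)² = 100R² + (20R + x)x`, so one step keeps `100n + a = R'² + Δ'`. Maximality of the
digit `x` gives `100Δ + a < (20R + x + 1)(x + 1)`, which is `Δ' ≤ 2R'`; when `x = 9` this
bound comes from `Δ ≤ 2R` instead.
-/

/-- One step of the digit-by-digit integer square root algorithm: given the
partial root `R` and remainder `Δ`, bring down the next two-digit block `a`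
and append the greatest decimal digit `x` with `(20·R + x)·x ≤ 100·Δ + a`. -/
def sqrtStep (p : ℕ × ℕ) (a : ℕ) : ℕ × ℕ :=
  let R := p.1
  let Δ := p.2
  let x := Nat.findGreatest (fun x => (20 * R + x) * x ≤ 100 * Δ + a) 9
  (10 * R + x, 100 * Δ + a - (20 * R + x) * x)

def IsSqrtRem (n : ℕ) (p : ℕ × ℕ) : Prop :=
  n = p.1 ^ 2 + p.2 ∧ p.2 ≤ 2 * p.1

namespace IsSqrtRem

theorem fst_eq_sqrt {n : ℕ} {p : ℕ × ℕ} (h : IsSqrtRem n p) : p.1 = Nat.sqrt n := by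
  rw [h.1, Nat.sqrt_add_eq' p.1 (by linarith [h.2])]

theorem sqrtStep {n a : ℕ} {p : ℕ × ℕ} (h : IsSqrtRem n p) (ha : a ≤ 99) :
    IsSqrtRem (100 * n + a) (sqrtStep p a) := by
  obtain ⟨R, Δ⟩ := p
  obtain ⟨hn, hΔ⟩ : n = R ^ 2 + Δ ∧ Δ ≤ 2 * R := h
  set P : ℕ → Prop := fun x => (20 * R + x) * x ≤ 100 * Δ + a
  set x := Nat.findGreatest P 9
  have hfit : (20 * R + x) * x ≤ 100 * Δ + a :=
    Nat.findGreatest_spec (P := P) (Nat.zero_le 9) (by simp [P])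
  have hnext : 100 * Δ + a < (20 * R + (x + 1)) * (x + 1) := by
    have hx9 : x ≤ 9 := Nat.findGreatest_le 9
    rcases hx9.eq_or_lt with h9 | hlt
    · rw [h9]
      omega
    · exact not_le.mp (Nat.findGreatest_is_greatest (P := P) (Nat.lt_succ_self x) hlt)
  have hsq : (10 * R + x) ^ 2 = 100 * R ^ 2 + (20 * R + x) * x := by ring
  have hsucc : (20 * R + (x + 1)) * (x + 1) = (20 * R + x) * x + (20 * R + 2 * x + 1) := by
    ring
  change 100 * n + a = (10 * R + x) ^ 2 + (100 * Δ + a - (20 * R + x) * x) ∧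
    100 * Δ + a - (20 * R + x) * x ≤ 2 * (10 * R + x)
  constructor <;> omega

theorem foldl {n : ℕ} {p : ℕ × ℕ} {L : List ℕ} (hL : ∀ a ∈ L, a ≤ 99) (h : IsSqrtRem n p) :
    IsSqrtRem (L.foldl (fun n a => 100 * n + a) n) (L.foldl _root_.sqrtStep p) := by
  induction L generalizing n p with
  | nil => exact h
  | cons a L ih =>
    simp only [List.foldl_cons]
    exact ih (fun b hb => hL b (List.mem_cons_of_mem a hb)) (h.sqrtStep (hL a List.mem_cons_self))

end IsSqrtRem

/-- Correctness of the digit-by-digit integer square root algorithm. -/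
theorem sqrt_digit_by_digit_correct (L : List ℕ) (hL : ∀ a ∈ L, a ≤ 99)
    (N : ℕ) (hN : N = L.foldl (fun n a => 100 * n + a) 0)
    (R Δ : ℕ) (hRΔ : (R, Δ) = L.foldl sqrtStep (0, 0)) :
    N = R ^ 2 + Δ ∧ (R ^ 2 ≤ N ∧ N < (R + 1) ^ 2) ∧ R = Nat.sqrt N ∧
      (Δ = 0 ↔ ∃ r : ℕ, N = r ^ 2) := by
  have h : IsSqrtRem N (R, Δ) := by
    rw [hN, hRΔ]
    exact IsSqrtRem.foldl hL ⟨rfl, le_rfl⟩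
  have hsqrt : R = Nat.sqrt N := h.fst_eq_sqrt
  obtain ⟨hsum, -⟩ : N = R ^ 2 + Δ ∧ Δ ≤ 2 * R := h
  have hsquare : Δ = 0 ↔ ∃ r : ℕ, N = r ^ 2 :=
    calc Δ = 0 ↔ R ^ 2 = N := by omega
      _ ↔ ∃ r : ℕ, r ^ 2 = N := by rw [hsqrt, Nat.exists_mul_self']
      _ ↔ ∃ r : ℕ, N = r ^ 2 := by simp only [eq_comm]
  refine ⟨hsum, ⟨?_, ?_⟩, hsqrt, hsquare⟩
  · exact hsqrt ▸ Nat.sqrt_le' N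
  · exact hsqrt ▸ Nat.lt_succ_sqrt' N
end

section
/- Let N, k be natural numbers, let R = Nat.sqrt (N · 10^(2·k)), and let x be the greatest natural number with x ≤ 9 and (20·R + x)·x ≤ 100·(N · 10^(2·k) − R^2). Then 10·R + x = Nat.sqrt (N · 10^(2·(k+1))). -/
/-!
Write `M = N·10^(2k)`, so that `N·10^(2(k+1)) = 10²·M` and `R = ⌊√M⌋`. Since
`(10R + x)² = 10²R² + (20R + x)x`, a digit `x` is admissible exactly when `(10R + x)² ≤ 10²M`,
i.e. when `10R + x ≤ ⌊√(10²M)⌋`. The greatest admissible digit is therefore `⌊√(10²M)⌋ - 10R`,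
provided this difference is a digit, which follows from `10R ≤ ⌊√(10²M)⌋ < 10(R + 1)`.
The argument works verbatim in any base `b`.
-/

namespace Nat

theorem findGreatest_add_le_eq_min (a s n : ℕ) :
    findGreatest (fun x => a + x ≤ s) n = min (s - a) n := by
  rw [findGreatest_eq_iff]
  refine ⟨min_le_right _ _, fun h => ?_, fun m hm hmn hle => ?_⟩ <;> omega

theorem mul_sqrt_le_sqrt_sq_mul (b n : ℕ) : b * sqrt n ≤ sqrt (b ^ 2 * n) := by
  rw [le_sqrt', mul_pow]
  exact Nat.mul_le_mul_left _ (sqrt_le' n)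

theorem sqrt_sq_mul_lt {b : ℕ} (hb : 0 < b) (n : ℕ) : sqrt (b ^ 2 * n) < b * (sqrt n + 1) := by
  rw [sqrt_lt', mul_pow]
  exact Nat.mul_lt_mul_of_pos_left (lt_succ_sqrt' n) (by positivity)

theorem digit_admissible_iff {b R M : ℕ} (hRM : R ^ 2 ≤ M) (x : ℕ) :
    (2 * b * R + x) * x ≤ b ^ 2 * (M - R ^ 2) ↔ b * R + x ≤ sqrt (b ^ 2 * M) := by
  have hexpand : (b * R + x) ^ 2 = b ^ 2 * R ^ 2 + (2 * b * R + x) * x := by ring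
  rw [le_sqrt', hexpand, Nat.mul_sub, ← Nat.le_sub_iff_add_le' (Nat.mul_le_mul_left _ hRM)]

theorem mul_sqrt_add_findGreatest_digit {b : ℕ} (hb : 0 < b) (M : ℕ) :
    b * sqrt M + findGreatest
      (fun x => (2 * b * sqrt M + x) * x ≤ b ^ 2 * (M - sqrt M ^ 2)) (b - 1) =
      sqrt (b ^ 2 * M) := by
  have hlow := mul_sqrt_le_sqrt_sq_mul b M
  have hhigh := sqrt_sq_mul_lt hb M
  simp_rw [digit_admissible_iff (sqrt_le' M), findGreatest_add_le_eq_min]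
  rw [mul_add, mul_one] at hhigh
  omega

end Nat

/-- Inductive step of the fractional digit-by-digit square root algorithm:
appending the maximal admissible decimal digit `x` to the partial
approximation `R = Nat.sqrt (N·10^(2k))` yields `Nat.sqrt (N·10^(2(k+1)))`. -/
theorem fractional_sqrt_digit_step (N k : ℕ)
    (R : ℕ) (hR : R = Nat.sqrt (N * 10 ^ (2 * k)))
    (x : ℕ)
    (hx : x = Nat.findGreatest
      (fun x => (20 * R + x) * x ≤ 100 * (N * 10 ^ (2 * k) - R ^ 2)) 9) :
    10 * R + x = Nat.sqrt (N * 10 ^ (2 * (k + 1))) := by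
  have hscale : N * 10 ^ (2 * (k + 1)) = 10 ^ 2 * (N * 10 ^ (2 * k)) := by ring
  subst hR hx
  rw [hscale, ← Nat.mul_sqrt_add_findGreatest_digit (by norm_num : 0 < 10)]
  norm_num
end

section
/- Let e, R, Δ be natural numbers with e ≥ 1 and Δ < (10·R + 10)^e − (10·R)^e. Then there exists a unique natural number x with x ≤ 9 such that (10·R + x)^e − (10·R)^e ≤ Δ and Δ < (10·R + x + 1)^e − (10·R)^e. -/
namespace Monotone

variable {α : Type*} [LinearOrder α] {f : ℕ → α} {a : α}

theorem eq_of_le_lt_succ (hf : Monotone f) {x y : ℕ} (hx : f x ≤ a) (hx' : a < f (x + 1))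
    (hy : f y ≤ a) (hy' : a < f (y + 1)) : x = y := by
  by_contra hne
  rcases Nat.lt_or_gt_of_ne hne with hxy | hyx
  · exact (hx'.trans_le (hf hxy)).not_ge hy
  · exact (hy'.trans_le (hf hyx)).not_ge hx

theorem existsUnique_le_lt_succ (hf : Monotone f) {n : ℕ} (h0 : f 0 ≤ a) (hn : a < f n) :
    ∃! x, x < n ∧ f x ≤ a ∧ a < f (x + 1) := by
  have hex : ∃ m, a < f m := ⟨n, hn⟩
  -- `x + 1` is the first index at which `f` exceeds `a`.
  obtain ⟨x, hx⟩ : ∃ x, Nat.find hex = x + 1 :=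
    Nat.exists_eq_succ_of_ne_zero fun h => (h ▸ Nat.find_spec hex).not_ge h0
  have hxn : x < n := by have := Nat.find_min' hex hn; omega
  have hfx : f x ≤ a := not_lt.mp (Nat.find_min hex (by omega))
  have hfx' : a < f (x + 1) := hx ▸ Nat.find_spec hex
  refine ⟨x, ⟨hxn, hfx, hfx'⟩, ?_⟩
  rintro y ⟨-, hfy, hfy'⟩
  exact hf.eq_of_le_lt_succ hfy hfy' hfx hfx'

end Monotone

theorem monotone_pow_add_sub_pow (b e : ℕ) : Monotone fun x : ℕ => (b + x) ^ e - b ^ e :=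
  fun _ _ hxy => Nat.sub_le_sub_right (Nat.pow_le_pow_left (Nat.add_le_add_left hxy b) e) _

theorem digit_selection_exists_unique_general (e R Δ : ℕ)
    (hΔ : Δ < (10 * R + 10) ^ e - (10 * R) ^ e) :
    ∃! x : ℕ, x ≤ 9 ∧ (10 * R + x) ^ e - (10 * R) ^ e ≤ Δ ∧
      Δ < (10 * R + x + 1) ^ e - (10 * R) ^ e := by
  have h0 : (10 * R + 0) ^ e - (10 * R) ^ e ≤ Δ := by simp
  simpa only [Nat.lt_succ_iff, ← add_assoc] using
    (monotone_pow_add_sub_pow (10 * R) e).existsUnique_le_lt_succ h0 hΔ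

/-- Existence and uniqueness of the maximal admissible decimal digit at each
step of the digit-by-digit e-th root algorithm. -/
theorem digit_selection_exists_unique (e R Δ : ℕ) (he : 1 ≤ e)
    (hΔ : Δ < (10 * R + 10) ^ e - (10 * R) ^ e) :
    ∃! x : ℕ, x ≤ 9 ∧ (10 * R + x) ^ e - (10 * R) ^ e ≤ Δ ∧
      Δ < (10 * R + x + 1) ^ e - (10 * R) ^ e :=
  digit_selection_exists_unique_general e R Δ hΔ
end

section
/- Let e, M, R, a, x be natural numbers with e ≥ 1, R^e ≤ M < (R+1)^e, a < 10^e, x ≤ 9, and suppose (10·R + x)^e − (10·R)^e ≤ 10^e·(M − R^e) + a and 10^e·(M − R^e) + a < (10·R + x + 1)^e − (10·R)^e. Then (10·R + x)^e ≤ 10^e·M + a < (10·R + x + 1)^e. -/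
/-! Since `(10R)^e = 10^e R^e ≤ 10^e M`, the scaled remainder `10^e (M - R^e) + a` equals
`(10^e M + a) - (10R)^e`, so both hypotheses are the conclusions with `(10R)^e` subtracted from
each side; subtracting a common lower bound preserves `≤` and `<` in `ℕ`. -/

theorem mul_pow_le_pow_mul {b e M R : ℕ} (hR : R ^ e ≤ M) : (b * R) ^ e ≤ b ^ e * M :=
  mul_pow b R e ▸ Nat.mul_le_mul_left _ hR

theorem pow_mul_tsub_pow_add {b e M R : ℕ} (a : ℕ) (hR : R ^ e ≤ M) :
    b ^ e * (M - R ^ e) + a = b ^ e * M + a - (b * R) ^ e := by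
  rw [Nat.mul_sub, ← mul_pow, Nat.sub_add_comm (mul_pow_le_pow_mul hR)]

theorem eth_root_digit_step_general (e M R a x : ℕ)
    (hR : R ^ e ≤ M)
    (hfeas : (10 * R + x) ^ e - (10 * R) ^ e ≤ 10 ^ e * (M - R ^ e) + a)
    (hmax : 10 ^ e * (M - R ^ e) + a < (10 * R + x + 1) ^ e - (10 * R) ^ e) :
    (10 * R + x) ^ e ≤ 10 ^ e * M + a ∧ 10 ^ e * M + a < (10 * R + x + 1) ^ e := by
  rw [pow_mul_tsub_pow_add a hR] at hfeas hmax
  have hbase : (10 * R) ^ e ≤ 10 ^ e * M + a := le_add_right (mul_pow_le_pow_mul hR)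
  exact ⟨(tsub_le_tsub_iff_right hbase).1 hfeas, (tsub_lt_tsub_iff_right hbase).1 hmax⟩

/-- Inductive step of the remainder invariant for the digit-by-digit
integer e-th root algorithm. -/
theorem eth_root_digit_step (e M R a x : ℕ) (he : 1 ≤ e)
    (hR : R ^ e ≤ M) (hR' : M < (R + 1) ^ e)
    (ha : a < 10 ^ e) (hx : x ≤ 9)
    (hfeas : (10 * R + x) ^ e - (10 * R) ^ e ≤ 10 ^ e * (M - R ^ e) + a)
    (hmax : 10 ^ e * (M - R ^ e) + a < (10 * R + x + 1) ^ e - (10 * R) ^ e) :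
    (10 * R + x) ^ e ≤ 10 ^ e * M + a ∧ 10 ^ e * M + a < (10 * R + x + 1) ^ e :=
  eth_root_digit_step_general e M R a x hR hfeas hmax
end

section
/- Fix a natural number e ≥ 2. Define step : ℕ × ℕ → ℕ → ℕ × ℕ by step (R, Δ) a = (10·R + x, 10^e·Δ + a − ((10·R + x)^e − (10·R)^e)), where x is the greatest natural number with x ≤ 9 and (10·R + x)^e − (10·R)^e ≤ 10^e·Δ + a. Let L be a list of natural numbers each < 10^e, let N = L.foldl (fun n a => 10^e·n + a) 0, and let (R, Δ) = L.foldl step (0, 0). Then N = R^e + Δ, R^e ≤ N < (R+1)^e, and Δ = 0 if and only if there exists a natural number r with N = r^e. -/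
/-- One step of the digit-by-digit binomial e-th root algorithm: given the
partial root `R` and remainder `Δ`, bring down the next base-`10^e` block `a`
and append the greatest decimal digit `x` whose binomial increment
`(10·R + x)^e − (10·R)^e` does not exceed the scaled remainder. -/
def ethRootStep (e : ℕ) (p : ℕ × ℕ) (a : ℕ) : ℕ × ℕ :=
  let R := p.1
  let Δ := p.2
  let x := Nat.findGreatest
    (fun x => (10 * R + x) ^ e - (10 * R) ^ e ≤ 10 ^ e * Δ + a) 9
  (10 * R + x, 10 ^ e * Δ + a - ((10 * R + x) ^ e - (10 * R) ^ e))

/-!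
The pair `(R, Δ)` maintained by the algorithm after reading a prefix with value `n` satisfies
`n = R ^ e + Δ` and `n < (R + 1) ^ e`, i.e. `R = ⌊n^(1/e)⌋` and `Δ = n - R ^ e`. Reading one more
block `a` replaces `n` by `10 ^ e * n + a`, which lies in `[(10 R) ^ e, (10 (R + 1)) ^ e)`; the
greatest digit `x` with `(10 R + x) ^ e ≤ 10 ^ e * n + a` is exactly the one chosen by the
binomial-increment test (as `(10 R) ^ e = 10 ^ e * R ^ e`), so the invariant is restored by
`(10 R + x, 10 ^ e * n + a - (10 R + x) ^ e)`.
-/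

def IsRootRemainder (e n : ℕ) (p : ℕ × ℕ) : Prop :=
  n = p.1 ^ e + p.2 ∧ n < (p.1 + 1) ^ e

theorem isRootRemainder_zero {e : ℕ} (he : e ≠ 0) : IsRootRemainder e 0 (0, 0) :=
  ⟨by simp [he], by simp⟩

theorem isRootRemainder_ethRootStep {e n a : ℕ} {p : ℕ × ℕ} (h : IsRootRemainder e n p)
    (ha : a < 10 ^ e) : IsRootRemainder e (10 ^ e * n + a) (ethRootStep e p a) := by
  obtain ⟨R, Δ⟩ := p
  obtain ⟨hn, hlt⟩ := h
  set Fits : ℕ → Prop := fun x => (10 * R + x) ^ e - (10 * R) ^ e ≤ 10 ^ e * Δ + a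
  set x := Nat.findGreatest Fits 9
  have hx9 : x ≤ 9 := Nat.findGreatest_le 9
  have hfits : Fits x := Nat.findGreatest_spec (Nat.zero_le 9) (by simp [Fits])
  have hbase : (10 * R) ^ e = 10 ^ e * R ^ e := mul_pow 10 R e
  have hmono : (10 * R) ^ e ≤ (10 * R + x) ^ e := Nat.pow_le_pow_left (by omega) e
  have hscaled : 10 ^ e * n = 10 ^ e * R ^ e + 10 ^ e * Δ := by rw [hn, mul_add]
  change 10 ^ e * n + a = (10 * R + x) ^ e + (10 ^ e * Δ + a - ((10 * R + x) ^ e - (10 * R) ^ e))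
    ∧ 10 ^ e * n + a < (10 * R + x + 1) ^ e
  refine ⟨by omega, ?_⟩
  rcases hx9.eq_or_lt with hx9 | hx9
  · calc 10 ^ e * n + a < 10 ^ e * (n + 1) := by rw [mul_add_one]; omega
      _ ≤ 10 ^ e * (R + 1) ^ e := Nat.mul_le_mul_left _ hlt
      _ = (10 * R + x + 1) ^ e := by rw [← mul_pow, hx9]; ring_nf
  · have hnext : ¬ Fits (x + 1) := Nat.findGreatest_is_greatest (Nat.lt_succ_self x) hx9
    simp only [Fits, not_le] at hnext
    rw [add_assoc]
    omega

theorem isRootRemainder_foldl_ethRootStep {e n : ℕ} {p : ℕ × ℕ} {L : List ℕ}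
    (h : IsRootRemainder e n p) (hL : ∀ a ∈ L, a < 10 ^ e) :
    IsRootRemainder e (L.foldl (fun n a => 10 ^ e * n + a) n) (L.foldl (ethRootStep e) p) := by
  induction L generalizing n p with
  | nil => exact h
  | cons a L ih =>
    exact ih (isRootRemainder_ethRootStep h (hL a List.mem_cons_self))
      fun b hb => hL b (List.mem_cons_of_mem a hb)

/-- Correctness of the digit-by-digit binomial algorithm for exact e-th power
detection and integer e-th root computation. -/
theorem eth_root_digit_by_digit_correct (e : ℕ) (he : 2 ≤ e)
    (L : List ℕ) (hL : ∀ a ∈ L, a < 10 ^ e)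
    (N : ℕ) (hN : N = L.foldl (fun n a => 10 ^ e * n + a) 0)
    (R Δ : ℕ) (hRΔ : (R, Δ) = L.foldl (ethRootStep e) (0, 0)) :
    N = R ^ e + Δ ∧ (R ^ e ≤ N ∧ N < (R + 1) ^ e) ∧
      (Δ = 0 ↔ ∃ r : ℕ, N = r ^ e) := by
  have he0 : e ≠ 0 := by omega
  obtain ⟨hsum, hlt⟩ : N = R ^ e + Δ ∧ N < (R + 1) ^ e := by
    rw [hN, show R = (R, Δ).1 from rfl, show Δ = (R, Δ).2 from rfl, hRΔ]
    exact isRootRemainder_foldl_ethRootStep (isRootRemainder_zero he0) hL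
  refine ⟨hsum, ⟨by omega, hlt⟩, ⟨fun hΔ => ⟨R, by omega⟩, ?_⟩⟩
  rintro ⟨r, rfl⟩
  have hRr : R ≤ r := (Nat.pow_le_pow_iff_left he0).1 (by omega)
  have hrR : r < R + 1 := (Nat.pow_lt_pow_iff_left he0).1 hlt
  obtain rfl : R = r := by omega
  omega
end

section
/- Let e ≥ 1 and let N, j be natural numbers. Then ⌊((N / 10^(e·j) : ℕ) : ℝ) ^ ((1 : ℝ)/e)⌋₊ = ⌊(N : ℝ) ^ ((1 : ℝ)/e)⌋₊ / 10^j, where the inner / is natural-number (floor) division, ^ on the reals is the real power function (rpow), and ⌊·⌋₊ is the natural-number floor. -/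
/-! The integer `e`-th root `r` is the upper adjoint of `k ↦ k ^ e`, i.e. `k ≤ r N ↔ k ^ e ≤ N`.
Any such map satisfies `r (N / b ^ e) = r N / b`, since both sides have the same lower bounds:
`k ≤ r (N / b ^ e) ↔ (k * b) ^ e ≤ N ↔ k * b ≤ r N ↔ k ≤ r N / b`. -/

lemma Nat.le_floor_rpow_one_div_iff {e : ℕ} (he : e ≠ 0) (N k : ℕ) :
    k ≤ ⌊(N : ℝ) ^ ((1 : ℝ) / e)⌋₊ ↔ k ^ e ≤ N := by
  rw [Nat.le_floor_iff (by positivity), one_div,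
    Real.le_rpow_inv_iff_of_pos (by positivity) (by positivity) (by positivity), Real.rpow_natCast]
  exact_mod_cast Iff.rfl

lemma Nat.root_div_pow_eq_div {e : ℕ} {r : ℕ → ℕ} (hr : ∀ k N, k ≤ r N ↔ k ^ e ≤ N)
    {b : ℕ} (hb : 0 < b) (N : ℕ) : r (N / b ^ e) = r N / b :=
  eq_of_forall_le_iff fun k => by
    rw [hr, Nat.le_div_iff_mul_le (pow_pos hb e), ← mul_pow, ← hr, Nat.le_div_iff_mul_le hb]

/-- Prefix stability of the integer e-th root: the integer e-th root of the
number formed by the highest base-`10^e` blocks of `N` consists of the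
leading digits of `⌊N^(1/e)⌋`. -/
theorem eth_root_prefix_stable (e : ℕ) (he : 1 ≤ e) (N j : ℕ) :
    ⌊((N / 10 ^ (e * j) : ℕ) : ℝ) ^ ((1 : ℝ) / e)⌋₊ =
      ⌊(N : ℝ) ^ ((1 : ℝ) / e)⌋₊ / 10 ^ j := by
  rw [mul_comm, pow_mul]
  exact Nat.root_div_pow_eq_div (fun k N => Nat.le_floor_rpow_one_div_iff (by omega) N k)
    (by positivity) N
end
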